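/- There exists ε > 0 such that for every odd m, no matrix b ∈ M_m(ℂ) with ‖b‖_OP ≤ 1 satisfies both ‖b*b − (b*b)²‖_OP < ε and ‖b*b + bb* − 1_m‖_OP < ε. (In fact ε = 1/4 works.) -/

import Mathlib

open Matrix


/-- Euclidean norm of a complex `m`-vector. -/
noncomputable def vecNorm {m : ℕ} (ξ : Fin m → ℂ) : ℝ :=
  Real.sqrt (∑ i, ‖ξ i‖ ^ 2)

/-- Operator norm of an `m × m` complex matrix:
the supremum of `‖a ξ‖` over unit vectors `ξ`. -/
noncomputable def opNorm {m : ℕ} (a : Matrix (Fin m) (Fin m) ℂ) : ℝ :=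
  sSup {r : ℝ | ∃ ξ : Fin m → ℂ, vecNorm ξ = 1 ∧ r = vecNorm (a.mulVec ξ)}

/-- Normalized Hilbert–Schmidt norm of an `m × m` complex matrix. -/
noncomputable def hsNorm {m : ℕ} (a : Matrix (Fin m) (Fin m) ℂ) : ℝ :=
  Real.sqrt ((1 / (m : ℝ)) * ∑ i, ∑ j, ‖a i j‖ ^ 2)

/-!
Write `p = b*b` and `q = bb*`. Since `‖p - p²‖ < 3/16`, the spectrum of `p` avoids `(1/4, 3/4)`.
Let `E`, `E'` be the spectral subspaces of `p` for eigenvalues `> 1/2` and `≤ 1/2`, and `F`, `F'`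
those of `q`. Because `b` intertwines `p` and `q` and is bounded below on `E` (and likewise `b*`
on `F`), `dim E = dim F`. On a unit vector of `E ∩ F` we would have `⟨px, x⟩ + ⟨qx, x⟩ ≥ 5/4`,
and on one of `E' ∩ F'` at most `3/4`; both contradict `‖p + q - 1‖ < 3/16`. Hence
`2 dim E ≤ m` and `2 (m - dim E) ≤ m`, so `m = 2 dim E`.
-/

open Module Set Finset
open scoped InnerProductSpace

namespace LinearMap.IsSymmetric

variable {𝕜 V : Type*} [RCLike 𝕜] [NormedAddCommGroup V] [InnerProductSpace 𝕜 V]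
  [FiniteDimensional 𝕜 V] {A : V →ₗ[𝕜] V}

-- Independent of the chosen eigenbasis: it is the sum of the eigenspaces for eigenvalues in `S`.
noncomputable def spectralSubspace (hA : A.IsSymmetric) (S : Set ℝ) : Submodule 𝕜 V :=
  Submodule.span 𝕜 (hA.eigenvectorBasis rfl '' {i | hA.eigenvalues rfl i ∈ S})

variable (hA : A.IsSymmetric) {S : Set ℝ}

theorem mem_spectralSubspace_iff {x : V} :
    x ∈ hA.spectralSubspace S ↔
      ∀ i, hA.eigenvalues rfl i ∉ S → ⟪hA.eigenvectorBasis rfl i, x⟫_𝕜 = 0 := by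
  set v := hA.eigenvectorBasis rfl
  constructor
  · intro hx i hi
    induction hx using Submodule.span_induction with
    | mem y hy =>
      obtain ⟨j, hj, rfl⟩ := hy
      exact v.orthonormal.2 (by rintro rfl; exact hi hj)
    | zero => exact inner_zero_right _
    | add y z _ _ hy hz => rw [inner_add_right, hy, hz, add_zero]
    | smul c y _ hy => rw [inner_smul_right, hy, mul_zero]
  · intro h
    rw [← v.sum_repr' x]
    refine Submodule.sum_mem _ fun i _ => ?_
    by_cases hi : hA.eigenvalues rfl i ∈ S
    · exact Submodule.smul_mem _ _ (Submodule.subset_span ⟨i, hi, rfl⟩)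
    · simp [h i hi]

theorem finrank_spectralSubspace [DecidablePred (· ∈ S)] :
    finrank 𝕜 (hA.spectralSubspace S) = #{i | hA.eigenvalues rfl i ∈ S} := by
  have hrange : hA.eigenvectorBasis rfl '' {i | hA.eigenvalues rfl i ∈ S} =
      Set.range (hA.eigenvectorBasis rfl ∘ ((↑) : {i // hA.eigenvalues rfl i ∈ S} → _)) := by
    rw [Set.range_comp, Subtype.range_coe_subtype]
  rw [spectralSubspace, hrange, finrank_span_eq_card
    ((hA.eigenvectorBasis rfl).orthonormal.linearIndependent.comp _ Subtype.val_injective),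
    Fintype.card_subtype]

theorem finrank_spectralSubspace_add_finrank_compl :
    finrank 𝕜 (hA.spectralSubspace S) + finrank 𝕜 (hA.spectralSubspace Sᶜ) = finrank 𝕜 V := by
  classical
  rw [finrank_spectralSubspace, finrank_spectralSubspace]
  simp only [Set.mem_compl_iff]
  rw [card_filter_add_card_filter_not, card_univ, Fintype.card_fin]

theorem re_inner_apply_self_eq_sum (x : V) :
    RCLike.re ⟪x, A x⟫_𝕜 = ∑ i, hA.eigenvalues rfl i * ‖⟪hA.eigenvectorBasis rfl i, x⟫_𝕜‖ ^ 2 := by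
  rw [← (hA.eigenvectorBasis rfl).sum_inner_mul_inner, map_sum]
  refine Finset.sum_congr rfl fun i _ => ?_
  rw [← hA, apply_eigenvectorBasis, inner_smul_left, RCLike.conj_ofReal, mul_left_comm,
    ← inner_conj_symm, RCLike.conj_mul, RCLike.re_ofReal_mul]
  norm_cast

theorem le_re_inner_apply_self {c : ℝ}
    (hc : ∀ i, hA.eigenvalues rfl i ∈ S → c ≤ hA.eigenvalues rfl i) {x : V}
    (hx : x ∈ hA.spectralSubspace S) : c * ‖x‖ ^ 2 ≤ RCLike.re ⟪x, A x⟫_𝕜 := by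
  rw [hA.re_inner_apply_self_eq_sum, ← (hA.eigenvectorBasis rfl).sum_sq_norm_inner_right, mul_sum]
  refine sum_le_sum fun i _ => ?_
  by_cases hi : hA.eigenvalues rfl i ∈ S
  · exact mul_le_mul_of_nonneg_right (hc i hi) (by positivity)
  · simp [(hA.mem_spectralSubspace_iff).1 hx i hi]

theorem re_inner_apply_self_le {c : ℝ}
    (hc : ∀ i, hA.eigenvalues rfl i ∈ S → hA.eigenvalues rfl i ≤ c) {x : V}
    (hx : x ∈ hA.spectralSubspace S) : RCLike.re ⟪x, A x⟫_𝕜 ≤ c * ‖x‖ ^ 2 := by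
  rw [hA.re_inner_apply_self_eq_sum, ← (hA.eigenvectorBasis rfl).sum_sq_norm_inner_right, mul_sum]
  refine sum_le_sum fun i _ => ?_
  by_cases hi : hA.eigenvalues rfl i ∈ S
  · exact mul_le_mul_of_nonneg_right (hc i hi) (by positivity)
  · simp [(hA.mem_spectralSubspace_iff).1 hx i hi]

variable {W : Type*} [NormedAddCommGroup W] [InnerProductSpace 𝕜 W] [FiniteDimensional 𝕜 W]
  {A' : W →ₗ[𝕜] W} (hA' : A'.IsSymmetric)

theorem spectralSubspace_le_comap {B : V →ₗ[𝕜] W} (hB : A' ∘ₗ B = B ∘ₗ A) :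
    hA.spectralSubspace S ≤ (hA'.spectralSubspace S).comap B := by
  refine Submodule.span_le.2 ?_
  rintro _ ⟨i, hi, rfl⟩
  refine (hA'.mem_spectralSubspace_iff).2 fun j hj => ?_
  have hBi : B (hA.eigenvectorBasis rfl i) ∈ End.eigenspace A' (hA.eigenvalues rfl i : 𝕜) := by
    rw [End.mem_eigenspace_iff, ← LinearMap.comp_apply, hB, LinearMap.comp_apply,
      apply_eigenvectorBasis, map_smul]
  have hne : (hA'.eigenvalues rfl j : 𝕜) ≠ hA.eigenvalues rfl i := fun h =>
    hj (RCLike.ofReal_injective h ▸ hi)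
  exact hA'.orthogonalFamily_eigenspaces hne
    ⟨_, End.mem_eigenspace_iff.2 (hA'.apply_eigenvectorBasis rfl j)⟩ ⟨_, hBi⟩

theorem finrank_spectralSubspace_Ioi_le {c : ℝ} (hc : 0 < c) {B : V →ₗ[𝕜] W}
    (hB : A' ∘ₗ B = B ∘ₗ A) (hnorm : ∀ x, RCLike.re ⟪x, A x⟫_𝕜 = ‖B x‖ ^ 2) :
    finrank 𝕜 (hA.spectralSubspace (Ioi c)) ≤ finrank 𝕜 (hA'.spectralSubspace (Ioi c)) := by
  refine LinearMap.finrank_le_finrank_of_injective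
    (f := B.restrict (hA.spectralSubspace_le_comap hA' hB)) ?_
  rw [← LinearMap.ker_eq_bot, LinearMap.ker_eq_bot']
  rintro ⟨x, hx⟩ hBx
  have hBx : B x = 0 := congrArg Subtype.val hBx
  have hcx : c * ‖x‖ ^ 2 ≤ 0 := by
    simpa [hnorm, hBx] using hA.le_re_inner_apply_self (fun i hi => le_of_lt hi) hx
  have : ‖x‖ ^ 2 ≤ 0 := nonpos_of_mul_nonpos_right hcx hc
  simpa using this

end LinearMap.IsSymmetric

theorem norm_sub_sq_le_of_apply_eq_smul {𝕜 E : Type*} [NormedField 𝕜]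
    [SeminormedAddCommGroup E] [NormedSpace 𝕜 E] {A : E →ₗ[𝕜] E} {ε : ℝ}
    (hA : ∀ x, ‖(A - A * A) x‖ ≤ ε * ‖x‖)
    {t : 𝕜} {v : E} (hv : A v = t • v) (hv0 : ‖v‖ ≠ 0) : ‖t - t ^ 2‖ ≤ ε := by
  have hAv : (A - A * A) v = (t - t ^ 2) • v := by
    rw [LinearMap.sub_apply, End.mul_apply, hv, map_smul, hv, smul_smul, sq, sub_smul]
  have := hA v
  rw [hAv, norm_smul] at this
  exact le_of_mul_le_mul_right this (lt_of_le_of_ne (norm_nonneg v) hv0.symm)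

theorem abs_re_inner_le_of_norm_apply_le {𝕜 V : Type*} [RCLike 𝕜] [NormedAddCommGroup V]
    [InnerProductSpace 𝕜 V] {B : V →ₗ[𝕜] V} {ε : ℝ} {x : V} (h : ‖B x‖ ≤ ε * ‖x‖) :
    |RCLike.re ⟪x, B x⟫_𝕜| ≤ ε * ‖x‖ ^ 2 :=
  calc |RCLike.re ⟪x, B x⟫_𝕜| ≤ ‖x‖ * ‖B x‖ :=
        (RCLike.abs_re_le_norm _).trans (norm_inner_le_norm _ _)
    _ ≤ ‖x‖ * (ε * ‖x‖) := mul_le_mul_of_nonneg_left h (norm_nonneg x)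
    _ = ε * ‖x‖ ^ 2 := by ring

namespace LinearMap

variable {𝕜 V W : Type*} [RCLike 𝕜] [NormedAddCommGroup V] [InnerProductSpace 𝕜 V]
  [FiniteDimensional 𝕜 V] [NormedAddCommGroup W] [InnerProductSpace 𝕜 W] [FiniteDimensional 𝕜 W]

theorem re_inner_adjoint_comp_self_apply (T : V →ₗ[𝕜] W) (x : V) :
    RCLike.re ⟪x, (adjoint T ∘ₗ T) x⟫_𝕜 = ‖T x‖ ^ 2 := by
  rw [comp_apply, adjoint_inner_right, inner_self_eq_norm_sq]

theorem finrank_spectralSubspace_adjoint_comp_self_Ioi (T : V →ₗ[𝕜] W) {c : ℝ} (hc : 0 < c) :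
    finrank 𝕜 ((isSymmetric_adjoint_comp_self T).spectralSubspace (Ioi c)) =
      finrank 𝕜 ((isSymmetric_self_comp_adjoint T).spectralSubspace (Ioi c)) := by
  refine le_antisymm ?_ ?_
  · exact (isSymmetric_adjoint_comp_self T).finrank_spectralSubspace_Ioi_le
      (isSymmetric_self_comp_adjoint T) hc (B := T) rfl (re_inner_adjoint_comp_self_apply T)
  · refine (isSymmetric_self_comp_adjoint T).finrank_spectralSubspace_Ioi_le
      (isSymmetric_adjoint_comp_self T) hc (B := adjoint T) rfl fun x => ?_
    simpa using re_inner_adjoint_comp_self_apply (adjoint T) x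

theorem even_finrank_of_approx_halving (T : V →ₗ[𝕜] V)
    (h₁ : ∀ x, ‖(adjoint T * T - adjoint T * T * (adjoint T * T)) x‖ ≤ 3 / 16 * ‖x‖)
    (h₂ : ∀ x, ‖(adjoint T * T + T * adjoint T - 1) x‖ ≤ 3 / 16 * ‖x‖) :
    Even (finrank 𝕜 V) := by
  set hp := isSymmetric_adjoint_comp_self T
  set hq := isSymmetric_self_comp_adjoint T
  have gap : ∀ i, hp.eigenvalues rfl i ≤ 1 / 4 ∨ 3 / 4 ≤ hp.eigenvalues rfl i := by
    intro i
    have h := norm_sub_sq_le_of_apply_eq_smul h₁ (hp.apply_eigenvectorBasis rfl i)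
      (by simp [(hp.eigenvectorBasis rfl).orthonormal.1 i])
    rw [← RCLike.ofReal_pow, ← RCLike.ofReal_sub, RCLike.norm_ofReal, abs_le] at h
    by_contra! h'
    nlinarith
  have hpq : ∀ x, |RCLike.re ⟪x, (adjoint T ∘ₗ T) x⟫_𝕜 + RCLike.re ⟪x, (T ∘ₗ adjoint T) x⟫_𝕜
      - ‖x‖ ^ 2| ≤ 3 / 16 * ‖x‖ ^ 2 := fun x => by
    simpa [inner_add_right, inner_sub_right, inner_self_eq_norm_sq]
      using abs_re_inner_le_of_norm_apply_le (h₂ x)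
  set E := hp.spectralSubspace (Ioi (1 / 2))
  set E' := hp.spectralSubspace (Ioi (1 / 2))ᶜ
  set F := hq.spectralSubspace (Ioi (1 / 2))
  set F' := hq.spectralSubspace (Ioi (1 / 2))ᶜ
  have hEF : Disjoint E F := Submodule.disjoint_def.2 fun x hxE hxF => by
    have hpx := hp.le_re_inner_apply_self
      (fun i hi => (gap i).resolve_left fun h => by linarith [mem_Ioi.1 hi]) hxE
    have hqx := hq.le_re_inner_apply_self (fun i hi => le_of_lt hi) hxF
    have : ‖x‖ ^ 2 ≤ 0 := by linarith [(abs_le.1 (hpq x)).2]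
    simpa using this
  have hEF' : Disjoint E' F' := Submodule.disjoint_def.2 fun x hxE hxF => by
    have hpx := hp.re_inner_apply_self_le
      (fun i hi => (gap i).resolve_right fun h => by linarith [notMem_Ioi.1 hi]) hxE
    have hqx := hq.re_inner_apply_self_le (fun i hi => notMem_Ioi.1 hi) hxF
    have : ‖x‖ ^ 2 ≤ 0 := by linarith [(abs_le.1 (hpq x)).1]
    simpa using this
  have := Submodule.finrank_add_finrank_le_of_disjoint hEF
  have := Submodule.finrank_add_finrank_le_of_disjoint hEF'
  have : finrank 𝕜 E + finrank 𝕜 E' = finrank 𝕜 V :=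
    hp.finrank_spectralSubspace_add_finrank_compl
  have : finrank 𝕜 F + finrank 𝕜 F' = finrank 𝕜 V :=
    hq.finrank_spectralSubspace_add_finrank_compl
  have : finrank 𝕜 E = finrank 𝕜 F :=
    finrank_spectralSubspace_adjoint_comp_self_Ioi T (by norm_num)
  exact ⟨finrank 𝕜 E, by omega⟩

end LinearMap

section

variable {𝕜 n : Type*} [RCLike 𝕜] [Fintype n] [DecidableEq n]

theorem toEuclideanLin_mul (a c : Matrix n n 𝕜) :
    toEuclideanLin (a * c) = toEuclideanLin a * toEuclideanLin c :=
  congrArg ContinuousLinearMap.toLinearMap (map_mul (toEuclideanCLM (n := n) (𝕜 := 𝕜)) a c)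

theorem toEuclideanLin_one : toEuclideanLin (1 : Matrix n n 𝕜) = 1 :=
  congrArg ContinuousLinearMap.toLinearMap (map_one (toEuclideanCLM (n := n) (𝕜 := 𝕜)))

end

section

variable {m : ℕ}

theorem vecNorm_eq_norm_toLp (ξ : Fin m → ℂ) :
    vecNorm ξ = ‖(WithLp.toLp 2 ξ : EuclideanSpace ℂ (Fin m))‖ := by
  rw [EuclideanSpace.norm_eq, vecNorm]

theorem norm_toEuclideanLin_apply_le_opNorm (a : Matrix (Fin m) (Fin m) ℂ)
    (x : EuclideanSpace ℂ (Fin m)) : ‖toEuclideanLin a x‖ ≤ opNorm a * ‖x‖ := by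
  have hbdd : BddAbove {r : ℝ | ∃ ξ : Fin m → ℂ, vecNorm ξ = 1 ∧ r = vecNorm (a *ᵥ ξ)} := by
    refine ⟨‖toEuclideanCLM (𝕜 := ℂ) a‖, ?_⟩
    rintro _ ⟨ξ, hξ, rfl⟩
    rw [vecNorm_eq_norm_toLp] at hξ ⊢
    simpa [hξ] using (toEuclideanCLM (𝕜 := ℂ) a).le_opNorm (WithLp.toLp 2 ξ)
  rcases eq_or_ne x 0 with rfl | hx
  · simp
  set u := (‖x‖⁻¹ : ℂ) • x
  have hu : vecNorm u.ofLp = 1 := by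
    rw [vecNorm_eq_norm_toLp]
    simp [u, norm_smul, hx]
  have : ‖toEuclideanLin a u‖ ≤ opNorm a :=
    le_csSup hbdd ⟨u.ofLp, hu, by rw [vecNorm_eq_norm_toLp]; rfl⟩
  rw [map_smul, norm_smul] at this
  simpa [hx, inv_mul_le_iff₀, norm_pos_iff, mul_comm] using this

end

/-- For odd `m`, no contraction is even approximately a partial isometry with
complementary range and source projections. -/
theorem no_approximate_halving_partial_isometry_odd :
    ∃ ε : ℝ, 0 < ε ∧ ∀ m : ℕ, Odd m → ∀ b : Matrix (Fin m) (Fin m) ℂ,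
      opNorm b ≤ 1 →
      ¬(opNorm (bᴴ * b - (bᴴ * b) * (bᴴ * b)) < ε ∧
        opNorm (bᴴ * b + b * bᴴ - 1) < ε) := by
  refine ⟨3 / 16, by norm_num, fun m hm b _ ⟨h₁, h₂⟩ => ?_⟩
  have bound (a : Matrix (Fin m) (Fin m) ℂ) (ha : opNorm a < 3 / 16) (x) :
      ‖toEuclideanLin a x‖ ≤ 3 / 16 * ‖x‖ :=
    (norm_toEuclideanLin_apply_le_opNorm a x).trans (by gcongr)
  have heven := (toEuclideanLin b).even_finrank_of_approx_halving
    (by simpa only [map_sub, toEuclideanLin_mul, toEuclideanLin_conjTranspose_eq_adjoint]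
      using bound _ h₁)
    (by simpa only [map_sub, map_add, toEuclideanLin_mul, toEuclideanLin_one,
      toEuclideanLin_conjTranspose_eq_adjoint] using bound _ h₂)
  rw [finrank_euclideanSpace_fin] at heven
  exact Nat.not_even_iff_odd.2 hm heven
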